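/- arXiv:2603.24597 — 2 statements merged into one kernel-verified Lean document; each statement's English description precedes it below -/
import Mathlib

section
/- Undecidability of overspecification detection: under the non-triviality assumptions (existence of x₀, s₀, y⁺, padding symbol # with s₀ ∈ S(x₀#ⁿ) \ W(x₀#ⁿ) for all n, V(y⁺,s₀)=1, V(y⁺,s) ≥ 0, V(ε,s)=0), the set of indices e of total computable functions f_e such that ∃ x, v_bw(x, f_e(x)) > 0 is not decidable; equivalently, the halting problem many-one reduces to this set via the map sending ⟨M,w⟩ to an index for the function that outputs y⁺ on inputs x₀#ⁿ when M halts on w within n² steps and ε otherwise. -/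
variable {A : Type*} [Primcodable A] [DecidableEq A]

/-- Beyond-warrant overspecification score. -/
def vbw (S W : List A → Finset (List A)) (V : List A → List A → ℤ)
    (x y : List A) : ℤ :=
  ∑ s ∈ S x \ W x, V y s

/-- Padded instance family `x₀ #ⁿ`. -/
def pad (x₀ : List A) (hash : A) (n : ℕ) : List A :=
  x₀ ++ List.replicate n hash

/-! The halting problem reduces to detecting overspecification: the pipeline attached to a
program `c` answers `y⁺` on an input of length `n` if `c` halts on `0` within `n` steps, and `ε`
otherwise. Since `ε` scores `0` everywhere, the pipeline overspecifies somewhere iff it ever answers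
`y⁺`, i.e. iff `c` halts; on the padded inputs `x₀ #ⁿ`, whose lengths are unbounded, the witness
`s₀` makes the score of `y⁺` positive. The pipeline only runs bounded simulations, so it is total
and computable uniformly in `c`, and s-m-n turns it into a computable map to indices. -/

open Nat.Partrec (Code)
open Nat.Partrec.Code

namespace Nat.Partrec.Code

theorem exists_isSome_evaln_iff_dom {c : Code} {n : ℕ} :
    (∃ k, (evaln k c n).isSome) ↔ (c.eval n).Dom := by
  simp only [Option.isSome_iff_exists, Part.dom_iff_mem, evaln_complete]
  exact exists_comm

theorem isSome_evaln_mono {c : Code} {n k₁ k₂ : ℕ} (hk : k₁ ≤ k₂)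
    (h : (evaln k₁ c n).isSome) : (evaln k₂ c n).isSome := by
  obtain ⟨y, hy⟩ := Option.isSome_iff_exists.1 h
  exact Option.isSome_iff_exists.2 ⟨y, evaln_mono hk hy⟩

end Nat.Partrec.Code

section HaltingPipeline

variable {α : Type*}

def haltingPipeline (yplus : List α) (c : Code) (x : List α) : List α :=
  if (evaln x.length c 0).isSome then yplus else []

theorem computable₂_haltingPipeline_ofNat [Primcodable α] (yplus : List α) :
    Computable₂ fun (m : ℕ) (x : List α) => haltingPipeline yplus (Denumerable.ofNat Code m) x := by
  have hevaln : Primrec fun p : ℕ × List α => evaln p.2.length (Denumerable.ofNat Code p.1) 0 :=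
    primrec_evaln.comp <| Primrec.pair
      (Primrec.pair (Primrec.list_length.comp Primrec.snd) ((Primrec.ofNat _).comp Primrec.fst))
      (Primrec.const 0)
  refine Primrec₂.to_comp <|
    (Primrec.cond (Primrec.option_isSome.comp hevaln) (Primrec.const yplus) (Primrec.const [])).of_eq
      fun p => ?_
  simp only [haltingPipeline, Bool.cond_eq_ite]

variable [DecidableEq α] {S W : List α → Finset (List α)} {V : List α → List α → ℤ}

theorem vbw_nil (heps : ∀ s, V [] s = 0) (x : List α) : vbw S W V x [] = 0 :=
  Finset.sum_eq_zero fun s _ => heps s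

theorem vbw_pos {x y s₀ : List α} (hs₀ : s₀ ∈ S x \ W x) (hone : V y s₀ = 1)
    (hpos : ∀ s, 0 ≤ V y s) : 0 < vbw S W V x y :=
  calc (0 : ℤ) < V y s₀ := by rw [hone]; exact one_pos
    _ ≤ vbw S W V x y := Finset.single_le_sum (fun s _ => hpos s) hs₀

theorem exists_vbw_haltingPipeline_pos_iff {x₀ s₀ yplus : List α} {hash : α}
    (hwit : ∀ n, s₀ ∈ S (pad x₀ hash n) \ W (pad x₀ hash n))
    (hone : V yplus s₀ = 1) (hpos : ∀ s, 0 ≤ V yplus s) (heps : ∀ s, V [] s = 0) (c : Code) :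
    (∃ x, 0 < vbw S W V x (haltingPipeline yplus c x)) ↔ (c.eval 0).Dom := by
  rw [← exists_isSome_evaln_iff_dom]
  constructor
  · rintro ⟨x, hx⟩
    refine ⟨x.length, by_contra fun hnot => ?_⟩
    rw [haltingPipeline, if_neg hnot, vbw_nil heps] at hx
    exact lt_irrefl 0 hx
  · rintro ⟨k, hk⟩
    have hlen : k ≤ (pad x₀ hash k).length := by simp [pad]
    refine ⟨pad x₀ hash k, ?_⟩
    rw [haltingPipeline, if_pos (isSome_evaln_mono hlen hk)]
    exact vbw_pos (hwit k) hone hpos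

end HaltingPipeline

theorem stmt_10_general (S W : List A → Finset (List A)) (V : List A → List A → ℤ)
    (x₀ s₀ yplus : List A) (hash : A)
    (hwit : ∀ n, s₀ ∈ S (pad x₀ hash n) \ W (pad x₀ hash n))
    (hone : V yplus s₀ = 1)
    (hpos : ∀ s, 0 ≤ V yplus s)
    (heps : ∀ s, V [] s = 0)
    -- an effective enumeration of (total computable) pipelines, with s-m-n:
    (fe : ℕ → List A → List A)
    (hsmn : ∀ F : ℕ → List A → List A, Computable₂ F →
      ∃ r : ℕ → ℕ, Computable r ∧ ∀ m x, fe (r m) x = F m x) :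
    ¬ ComputablePred (fun e : ℕ => ∃ x, 0 < vbw S W V x (fe e x)) := by
  intro hdecide
  obtain ⟨r, hr, hre⟩ := hsmn _ (computable₂_haltingPipeline_ofNat yplus)
  have hreduce : (fun c : Code => (c.eval 0).Dom) ≤₀
      fun e : ℕ => ∃ x, 0 < vbw S W V x (fe e x) := by
    refine ⟨fun c => r (Encodable.encode c), hr.comp Computable.encode, fun c => ?_⟩
    simp only [hre, Denumerable.ofNat_encode]
    exact (exists_vbw_haltingPipeline_pos_iff hwit hone hpos heps c).symm
  exact ComputablePred.halting_problem 0 (ComputablePred.computable_of_manyOneReducible hreduce hdecide)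

theorem stmt_10 (S W : List A → Finset (List A)) (V : List A → List A → ℤ)
    (hW : ∀ x, W x ⊆ S x)
    (hV : ∀ y s, V y s = -1 ∨ V y s = 0 ∨ V y s = 1)
    (x₀ s₀ yplus : List A) (hash : A)
    (hwit : ∀ n, s₀ ∈ S (pad x₀ hash n) \ W (pad x₀ hash n))
    (hone : V yplus s₀ = 1)
    (hpos : ∀ s, 0 ≤ V yplus s)
    (heps : ∀ s, V [] s = 0)
    -- an effective enumeration of (total computable) pipelines, with s-m-n:
    (fe : ℕ → List A → List A)
    (hsmn : ∀ F : ℕ → List A → List A, Computable₂ F →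
      ∃ r : ℕ → ℕ, Computable r ∧ ∀ m x, fe (r m) x = F m x) :
    ¬ ComputablePred (fun e : ℕ => ∃ x, 0 < vbw S W V x (fe e x)) :=
  stmt_10_general S W V x₀ s₀ yplus hash hwit hone hpos heps fe hsmn
end

section
/- Correctness of the halting reduction: fix the gadget f_{M,w}(x) = y⁺ if x = x₀#ⁿ for some n and M halts on w within n² steps, else ε. Then M halts on w if and only if ∃ x, v_bw(x, f_{M,w}(x)) > 0. -/
variable {A : Type*} [DecidableEq A]

open Classical in
theorem stmt_11 (S W : List A → Finset (List A)) (V : List A → List A → ℤ)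
    (hW : ∀ x, W x ⊆ S x)
    (hV : ∀ y s, V y s = -1 ∨ V y s = 0 ∨ V y s = 1)
    (x₀ s₀ yplus : List A) (hash : A)
    (hwit : ∀ n, s₀ ∈ S (pad x₀ hash n) \ W (pad x₀ hash n))
    (hone : V yplus s₀ = 1)
    (hpos : ∀ s, 0 ≤ V yplus s)
    (heps : ∀ s, V [] s = 0)
    (Halt : ℕ → Bool)
    (hmono : ∀ t t', t ≤ t' → Halt t = true → Halt t' = true)
    (f : List A → List A)
    (hf : ∀ x, f x =
      if (∃ n, x = pad x₀ hash n ∧ Halt (n * n) = true) then yplus else []) :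
    (∃ t, Halt t = true) ↔ (∃ x, 0 < vbw S W V x (f x)) := by
  constructor
  · rintro ⟨t, ht⟩
    refine ⟨pad x₀ hash t, ?_⟩
    have hht : Halt (t * t) = true := hmono t (t*t) (by nlinarith) ht
    have hcond : ∃ n, pad x₀ hash t = pad x₀ hash n ∧ Halt (n * n) = true :=
      ⟨t, rfl, hht⟩
    have hfx : f (pad x₀ hash t) = yplus := by rw [hf]; simp [hcond]
    rw [hfx, vbw]
    have hmem := hwit t
    calc (0:ℤ) < 1 := one_pos
      _ = V yplus s₀ := hone.symm
      _ ≤ ∑ s ∈ S (pad x₀ hash t) \ W (pad x₀ hash t), V yplus s :=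
        Finset.single_le_sum (fun s _ => hpos s) hmem
  · rintro ⟨x, hx⟩
    by_cases hc : ∃ n, x = pad x₀ hash n ∧ Halt (n * n) = true
    · obtain ⟨n, _, hn⟩ := hc
      exact ⟨n * n, hn⟩
    · exfalso
      have hfx : f x = [] := by rw [hf]; simp [hc]
      rw [hfx, vbw] at hx
      simp [heps] at hx
end
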